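/- arXiv:math/9911273 — 4 statements merged into one kernel-verified Lean document; each statement's English description precedes it below -/
import Mathlib

section
/- If t is an integer with t ≡ 2 (mod 3), then there are no rational numbers p, q with q² = t·(1 − p² + p⁴). -/
lemma zmod3_aux (A B X : ZMod 3) (h : ¬(A = 0 ∧ B = 0)) :
    X * X ≠ 2 * (B ^ 4 - A ^ 2 * B ^ 2 + A ^ 4) := by
  revert A B X; decide

/-- If `t` is an integer with `t ≡ 2 (mod 3)`, then the equation
`q² = t·(1 − p² + p⁴)` has no solutions with `p, q` rational numbers. -/
theorem no_rational_solutions_of_two_mod_three (t : ℤ) (ht : t % 3 = 2) :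
    ¬ ∃ p q : ℚ, q ^ 2 = (t : ℚ) * (1 - p ^ 2 + p ^ 4) := by
  rintro ⟨p, q, hq⟩
  have hb0 : ((p.den : ℤ) : ℚ) ≠ 0 := by
    exact_mod_cast Nat.cast_ne_zero.mpr p.den_nz
  have hpa : (p.num : ℚ) = p * (p.den : ℚ) := by
    exact (div_eq_iff (by exact_mod_cast p.den_nz)).mp (Rat.num_div_den p)
  set r : ℚ := q * ((p.den : ℤ) : ℚ) ^ 2 with hr
  set N : ℤ := (p.den : ℤ) ^ 4 - p.num ^ 2 * (p.den : ℤ) ^ 2 + p.num ^ 4 with hN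
  have key : r * r = ((t * N : ℤ) : ℚ) := by
    rw [hr, hN]
    push_cast
    rw [show q * (p.den : ℚ) ^ 2 * (q * (p.den : ℚ) ^ 2) = q ^ 2 * (p.den : ℚ) ^ 4 from by
      ring, hq, hpa]
    ring
  -- r is an integer
  have hden : r.den * r.den = 1 := by
    rw [← Rat.mul_self_den, key, Rat.den_intCast]
  have hden1 : r.den = 1 := by nlinarith [r.pos, hden]
  have hrint : ((r.num : ℤ) : ℚ) = r := by
    rw [← Rat.num_div_den r, hden1]; simp
  have hz : r.num * r.num = t * N := by
    have h := key
    rw [← hrint] at h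
    exact_mod_cast h
  -- pass to ZMod 3
  have hz3 : ((r.num : ZMod 3)) * ((r.num : ZMod 3)) =
      2 * (((p.den : ℤ) : ZMod 3) ^ 4 - ((p.num : ℤ) : ZMod 3) ^ 2 * ((p.den : ℤ) : ZMod 3) ^ 2
        + ((p.num : ℤ) : ZMod 3) ^ 4) := by
    have ht3 : ((t : ℤ) : ZMod 3) = 2 := by
      have := Int.mul_ediv_add_emod t 3
      have h' : t = 3 * (t / 3) + 2 := by omega
      rw [h']; push_cast
      rw [show (3 : ZMod 3) = 0 from rfl]; ring
    have := congrArg (fun n : ℤ => (n : ZMod 3)) hz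
    simp only [hN] at this
    push_cast at this
    rw [ht3] at this
    convert this using 2 <;> push_cast <;> ring
  have hAB : ¬(((p.num : ℤ) : ZMod 3) = 0 ∧ ((p.den : ℤ) : ZMod 3) = 0) := by
    rintro ⟨hA, hB⟩
    rw [ZMod.intCast_zmod_eq_zero_iff_dvd] at hA hB
    have h1 : (3 : ℕ) ∣ p.num.natAbs := by
      have := Int.natAbs_dvd_natAbs.mpr hA
      simpa using this
    have h2 : (3 : ℕ) ∣ p.den := by exact_mod_cast hB
    have := Nat.dvd_gcd h1 h2
    rw [Nat.Coprime.gcd_eq_one p.reduced] at this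
    omega
  exact zmod3_aux _ _ _ hAB hz3
end

section
/- If t is an integer with t ≡ 2 (mod 3), then the equation q² = t·(1 − p² + p⁴) has no solutions with p, q in the 3-adic numbers ℚ₃. -/
/-!
Since `1 - p² + p⁴ = p⁴ (1 - p⁻² + p⁻⁴)`, replacing `(p, q)` by `(p⁻¹, q / p²)` reduces to the case
`p ∈ ℤ₃`, and then `q ∈ ℤ₃` as well. Modulo 3 the quartic takes only the value `1`, so the equation
would make `t ≡ 2` a square modulo 3, which it is not.
-/

theorem ZMod.sq_ne_two_mul_quartic (a b : ZMod 3) : b ^ 2 ≠ 2 * (1 - a ^ 2 + a ^ 4) := by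
  revert a b
  decide

theorem PadicInt.sq_ne_mul_quartic_of_emod_three (t : ℤ) (ht : t % 3 = 2) (x y : ℤ_[3]) :
    y ^ 2 ≠ t * (1 - x ^ 2 + x ^ 4) := by
  intro h
  have ht' : (t : ZMod 3) = 2 := by
    rw [← ZMod.intCast_mod t 3, Nat.cast_ofNat, ht, Int.cast_ofNat]
  have h3 := congrArg PadicInt.toZMod h
  simp only [map_pow, map_mul, map_add, map_sub, map_one, map_intCast, ht'] at h3
  exact ZMod.sq_ne_two_mul_quartic _ _ h3

theorem PadicInt.norm_le_one_of_sq_eq_coe {p : ℕ} [Fact p.Prime] {q : ℚ_[p]} {z : ℤ_[p]}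
    (h : q ^ 2 = z) : ‖q‖ ≤ 1 := by
  rw [← pow_le_one_iff_of_nonneg (norm_nonneg q) two_ne_zero, ← norm_pow, h]
  exact z.norm_le_one

theorem PadicInt.coe_sq_ne_mul_quartic_of_emod_three (t : ℤ) (ht : t % 3 = 2) (x : ℤ_[3])
    (q : ℚ_[3]) : q ^ 2 ≠ t * (1 - (x : ℚ_[3]) ^ 2 + (x : ℚ_[3]) ^ 4) := by
  intro h
  have hq : q ^ 2 = ((t * (1 - x ^ 2 + x ^ 4) : ℤ_[3]) : ℚ_[3]) := by push_cast; exact h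
  exact PadicInt.sq_ne_mul_quartic_of_emod_three t ht x ⟨q, PadicInt.norm_le_one_of_sq_eq_coe hq⟩
    (PadicInt.ext hq)

theorem quartic_inv_mul_pow_four {K : Type*} [Field K] {p : K} (hp : p ≠ 0) :
    (1 - p⁻¹ ^ 2 + p⁻¹ ^ 4) * p ^ 4 = 1 - p ^ 2 + p ^ 4 := by
  field_simp
  ring

/-- If `t` is an integer with `t ≡ 2 (mod 3)`, then the equation
`q² = t·(1 − p² + p⁴)` has no solutions with `p, q` in the 3-adic numbers `ℚ₃`. -/
theorem no_padic_solutions_of_two_mod_three (t : ℤ) (ht : t % 3 = 2) :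
    ¬ ∃ p q : ℚ_[3], q ^ 2 = (t : ℚ_[3]) * (1 - p ^ 2 + p ^ 4) := by
  rintro ⟨p, q, h⟩
  rcases le_or_gt ‖p‖ 1 with hp | hp
  · exact PadicInt.coe_sq_ne_mul_quartic_of_emod_three t ht ⟨p, hp⟩ q h
  · have hp0 : p ≠ 0 := norm_pos_iff.mp (one_pos.trans hp)
    have hpinv : ‖p⁻¹‖ ≤ 1 := by
      rw [norm_inv]
      exact inv_le_one_of_one_le₀ hp.le
    apply PadicInt.coe_sq_ne_mul_quartic_of_emod_three t ht ⟨p⁻¹, hpinv⟩ (q / p ^ 2)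
    rw [div_pow, h, ← quartic_inv_mul_pow_four hp0]
    field_simp
end

section
/- Let N be a rational number with N ≠ ±1 and N not a rational cube, let α₀ be a real cube root of N, and let r = 4(α₀² + (α₀²−1)²). Then r is not a square in the field ℚ(α₀). -/
/-!
Expanding `(u + v α₀ + w α₀²)² = r` in the basis `1, α₀, α₀²` of `ℚ(α₀)` gives three rational
equations. Eliminating `N` and `v` from them forces `3uw ∓ 2(u + w) + 4 = 0`, and then
`(3 - 3w, 3v(3w - 2)/2)` (or the same with `u, w` negated) is a rational point with `y ≠ 0` on
`y² = x(x - 1)(x - 9)`, a curve 2-isogenous to `Y² = X³ - X² - 4X + 4` (24A1).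

Its only affine rational points are the three points of order two, by Fermat descent on the
height `|num x| + den x`. Write `x = m/e²` in lowest terms. If `9 ∣ m`, translating by `(0, 0)`,
i.e. `x ↦ 9/x`, lowers the height; `3 ∥ m` is impossible modulo 3; otherwise `m = a²` and the
coprime factorisation of `(a² - e²)(a² - 9e²)` into squares, up to sign and a factor 8, yields
`A² = B² + E²`, `A² = C² + 9E²` with `E` small, and `x = (A - B)(A - C)/E²` is a smaller point.
-/

open Polynomial

theorem eq_zero_of_algebraMap_add_mul_add_mul_sq_eq_zero {K L : Type*} [Field K] [Ring L]
    [Algebra K L] {α : L} (hα : 2 < (minpoly K α).natDegree) {a b c : K}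
    (h : algebraMap K L a + algebraMap K L b * α + algebraMap K L c * α ^ 2 = 0) :
    a = 0 ∧ b = 0 ∧ c = 0 := by
  set p : K[X] := C c * X ^ 2 + C b * X + C a
  have hp : p = 0 := by
    by_contra hp
    have hroot : aeval α p = 0 := by
      rw [← h]; simp only [p, map_add, map_mul, map_pow, aeval_C, aeval_X]; abel
    have hle : (minpoly K α).natDegree ≤ 2 :=
      natDegree_le_of_degree_le ((minpoly.degree_le_of_ne_zero K α hp hroot).trans
        degree_quadratic_le)
    omega
  refine ⟨?_, ?_, ?_⟩
  · simpa [p] using congrArg (coeff · 0) hp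
  · simpa [p] using congrArg (coeff · 1) hp
  · simpa [p] using congrArg (coeff · 2) hp

theorem natDegree_minpoly_of_pow_eq {K L : Type*} [Field K] [Ring L] [Nontrivial L]
    [Algebra K L] {p : ℕ} (hp : p.Prime) {a : K} (ha : ∀ b : K, b ^ p ≠ a) {α : L}
    (hα : α ^ p = algebraMap K L a) : (minpoly K α).natDegree = p := by
  rw [← minpoly.eq_of_irreducible_of_monic (X_pow_sub_C_irreducible_of_prime hp ha)
    (by simp [hα]) (monic_X_pow_sub_C a hp.ne_zero), natDegree_X_pow_sub_C]

theorem Int.exists_sq_eq_of_isCoprime_of_mul_eq_sq {P Q n : ℤ} (hPQ : IsCoprime P Q)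
    (h : P * Q = n ^ 2) (hP : 0 < P) : ∃ a k : ℤ, 0 < a ∧ P = a ^ 2 ∧ Q = k ^ 2 ∧ n = a * k := by
  obtain ⟨a₀, ha₀⟩ := Int.sq_of_isCoprime hPQ h
  have hPa : P = |a₀| ^ 2 := by
    rw [sq_abs]; exact ha₀.resolve_right (by nlinarith [sq_nonneg a₀])
  have ha : 0 < |a₀| := by nlinarith [abs_nonneg a₀]
  obtain ⟨k, rfl⟩ : |a₀| ∣ n := (Int.pow_dvd_pow_iff two_ne_zero).1 ⟨Q, by rw [← h, hPa]⟩
  exact ⟨|a₀|, k, ha, hPa,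
    mul_left_cancel₀ (pow_ne_zero 2 ha.ne') (by linear_combination h - Q * hPa), rfl⟩

theorem Int.exists_pos_sq_of_isCoprime_of_mul_eq_sq {P Q k : ℤ} (hPQ : IsCoprime P Q)
    (hk : P * Q = k ^ 2) (hk0 : k ≠ 0) :
    ∃ p q : ℤ, 0 < p ∧ 0 < q ∧ (P = p ^ 2 ∧ Q = q ^ 2 ∨ P = -p ^ 2 ∧ Q = -q ^ 2) := by
  have hPQ0 : 0 < P * Q := hk ▸ by positivity
  obtain ⟨p, hp⟩ := Int.sq_of_isCoprime hPQ hk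
  obtain ⟨q, hq⟩ := Int.sq_of_isCoprime hPQ.symm (by rw [mul_comm, hk])
  have hp0 : p ≠ 0 := by rintro rfl; rcases hp with rfl | rfl <;> simp at hPQ0
  have hq0 : q ≠ 0 := by rintro rfl; rcases hq with rfl | rfl <;> simp at hPQ0
  refine ⟨|p|, |q|, abs_pos.2 hp0, abs_pos.2 hq0, ?_⟩
  rw [sq_abs, sq_abs]
  rcases hp with rfl | rfl <;> rcases hq with rfl | rfl
  · exact Or.inl ⟨rfl, rfl⟩
  · nlinarith [mul_nonneg (sq_nonneg p) (sq_nonneg q)]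
  · nlinarith [mul_nonneg (sq_nonneg p) (sq_nonneg q)]
  · exact Or.inr ⟨rfl, rfl⟩

theorem IsCoprime.sq_sub_sq {a e : ℤ} (h : IsCoprime a e) : IsCoprime (a ^ 2 - e ^ 2) e := by
  rw [sq e]; exact (IsCoprime.sub_mul_left_left_iff (z := e)).2 h.pow_left

theorem Rat.exists_intCast_eq_of_pow_eq_intCast {q : ℚ} {k : ℕ} {n : ℤ} (hk : k ≠ 0)
    (h : q ^ k = n) : ∃ z : ℤ, (z : ℚ) = q := by
  refine ⟨q.num, (Rat.den_eq_one_iff q).1 ?_⟩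
  simpa [Rat.den_pow, hk] using congrArg Rat.den h

def ratHeight (x : ℚ) : ℕ := x.num.natAbs + x.den

theorem ratHeight_div_le {a b : ℤ} (ha : 0 < a) (hb : 0 < b) :
    (ratHeight (a / b) : ℤ) ≤ a + b := by
  rw [← Rat.divInt_eq_div]
  have hnum := Int.natAbs_le_of_dvd_ne_zero (Rat.num_dvd a hb.ne') ha.ne'
  have hden := Int.le_of_dvd hb (Rat.den_dvd a b)
  unfold ratHeight
  omega

def HasPointOfHeightLT (B : ℤ) : Prop :=
  ∃ x y : ℚ, y ^ 2 = x * (x - 1) * (x - 9) ∧ y ≠ 0 ∧ (ratHeight x : ℤ) < B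

theorem HasPointOfHeightLT.mono {B B' : ℤ} (h : HasPointOfHeightLT B) (hB : B ≤ B') :
    HasPointOfHeightLT B' :=
  let ⟨x, y, hxy, hy, hx⟩ := h
  ⟨x, y, hxy, hy, hx.trans_le hB⟩

theorem hasPointOfHeightLT_of_sq_eq_sq_add_sq {A B C E : ℤ} (hA : 0 < A) (hB : 0 < B)
    (hC : 0 < C) (hE : 0 < E) (h₁ : A ^ 2 = B ^ 2 + E ^ 2) (h₉ : A ^ 2 = C ^ 2 + 9 * E ^ 2) :
    HasPointOfHeightLT (2 * E ^ 2) := by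
  have hBA : B < A := by nlinarith
  have hCA : C < A := by nlinarith
  have hP0 : 0 < (A - B) * (A - C) := mul_pos (sub_pos.2 hBA) (sub_pos.2 hCA)
  have hP : (A - B) * (A - C) < E ^ 2 := by
    nlinarith [mul_lt_mul_of_pos_left (by linarith : A - C < A + B) (sub_pos.2 hBA)]
  refine ⟨((A - B) * (A - C) : ℤ) / (E ^ 2 : ℤ), ((A - B) * (A - C) * (B + C) : ℤ) / (E : ℚ) ^ 3,
    ?_, by positivity, by linarith [ratHeight_div_le hP0 (pow_pos hE 2)]⟩
  have hE0 : (E : ℚ) ≠ 0 := by positivity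
  have hq₁ : (A : ℚ) ^ 2 = B ^ 2 + E ^ 2 := by exact_mod_cast h₁
  have hq₉ : (A : ℚ) ^ 2 = C ^ 2 + 9 * E ^ 2 := by exact_mod_cast h₉
  have hx₁ : ((A - B) * (A - C) : ℚ) / E ^ 2 - 1 = -((A - B) * (B + C)) / E ^ 2 := by
    field_simp; linear_combination hq₁
  have hx₉ : ((A - B) * (A - C) : ℚ) / E ^ 2 - 9 = -((A - C) * (B + C)) / E ^ 2 := by
    field_simp; linear_combination hq₉
  push_cast
  rw [hx₁, hx₉]
  field_simp

theorem exists_int_model {x y : ℚ} (h : y ^ 2 = x * (x - 1) * (x - 9)) (hy : y ≠ 0) :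
    ∃ m e n : ℤ, 0 < m ∧ 0 < e ∧ IsCoprime m e ∧ n ≠ 0 ∧ x = m / e ^ 2 ∧
      (ratHeight x : ℤ) = m + e ^ 2 ∧ n ^ 2 = m * (m - e ^ 2) * (m - 9 * e ^ 2) := by
  set m := x.num
  set d : ℤ := (x.den : ℤ)
  have hx : x = m / d := (Rat.num_div_den x).symm
  have hmd : IsCoprime m d := Int.isCoprime_iff_gcd_eq_one.2 x.reduced
  have hd : (d : ℚ) ≠ 0 := by positivity
  have hY : (y * d ^ 2) ^ 2 = ((d * (m * (m - d) * (m - 9 * d)) : ℤ) : ℚ) := by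
    rw [hx] at h; push_cast; rw [mul_pow, h]; field_simp
  obtain ⟨Y, hYy⟩ := Rat.exists_intCast_eq_of_pow_eq_intCast two_ne_zero hY
  have hdm : IsCoprime d (m * (m - d) * (m - 9 * d)) := by
    refine (hmd.symm.mul_right ?_).mul_right (IsCoprime.sub_mul_right_right_iff.2 hmd.symm)
    simpa only [one_mul] using (IsCoprime.sub_mul_right_right_iff (z := 1)).2 hmd.symm
  obtain ⟨e, n, he, hde, hn, rfl⟩ := Int.exists_sq_eq_of_isCoprime_of_mul_eq_sq hdm
    (by exact_mod_cast hYy ▸ hY.symm) (by positivity)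
  rw [hde] at hn
  have hn0 : n ≠ 0 := by
    rintro rfl
    simp only [mul_zero, Int.cast_zero] at hYy
    exact mul_ne_zero hy (by positivity) hYy.symm
  have hm : 0 < m := by
    by_contra! hm
    have : 0 < n ^ 2 := by positivity
    nlinarith [mul_pos_of_neg_of_neg (by nlinarith : m - e ^ 2 < 0)
      (by nlinarith : m - 9 * e ^ 2 < 0)]
  refine ⟨m, e, n, hm, he, (IsCoprime.pow_right_iff two_pos).1 (hde ▸ hmd), hn0, ?_, ?_, hn.symm⟩
  · rw [hx, hde]; push_cast; rfl
  · unfold ratHeight; rw [← hde]; push_cast; rw [abs_of_pos hm]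

theorem hasPointOfHeightLT_of_nine_dvd {x y : ℚ} {m e : ℤ}
    (h : y ^ 2 = x * (x - 1) * (x - 9)) (hy : y ≠ 0) (hm : 0 < m) (he : 0 < e)
    (hx : x = m / e ^ 2) (h9 : 9 ∣ m) : HasPointOfHeightLT (m + e ^ 2) := by
  obtain ⟨m₉, rfl⟩ := h9
  have hx0 : x ≠ 0 := by rw [hx]; positivity
  refine ⟨9 / x, 9 * y / x ^ 2, ?_, by positivity, ?_⟩
  · field_simp
    linear_combination h
  · have : 9 / x = ((e ^ 2 : ℤ) : ℚ) / (m₉ : ℤ) := by rw [hx]; push_cast; field_simp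
    rw [this]
    linarith [ratHeight_div_le (pow_pos he 2) (by omega : 0 < m₉)]

theorem nine_dvd_of_three_dvd {m e n : ℤ} (hme : IsCoprime m e)
    (hn : n ^ 2 = m * (m - e ^ 2) * (m - 9 * e ^ 2)) (h3 : 3 ∣ m) : 9 ∣ m := by
  by_contra h9
  obtain ⟨m₃, rfl⟩ := h3
  have h3m : ¬ 3 ∣ m₃ := fun ⟨k, hk⟩ => h9 ⟨k, by rw [hk]; ring⟩
  have h3e : ¬ 3 ∣ e := fun h3e => by
    have := hme.isUnit_of_dvd' (dvd_mul_right 3 m₃) h3e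
    norm_num [Int.isUnit_iff] at this
  obtain ⟨n₃, rfl⟩ : 3 ∣ n :=
    Int.prime_three.dvd_of_dvd_pow ⟨m₃ * (3 * m₃ - e ^ 2) * (3 * m₃ - 9 * e ^ 2), by rw [hn]; ring⟩
  have hn₃ : n₃ ^ 2 = m₃ * (3 * m₃ - e ^ 2) * (m₃ - 3 * e ^ 2) :=
    mul_left_cancel₀ (by norm_num : (9 : ℤ) ≠ 0) (by linear_combination hn)
  -- modulo 3 this says `n₃² = -(m₃ e)²`, and `-1` is not a square mod 3
  have hmod := congrArg (fun z : ℤ => (z : ZMod 3)) hn₃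
  have hm₃ : (m₃ : ZMod 3) ≠ 0 := by rwa [Ne, ZMod.intCast_zmod_eq_zero_iff_dvd]
  have he₃ : (e : ZMod 3) ≠ 0 := by rwa [Ne, ZMod.intCast_zmod_eq_zero_iff_dvd]
  push_cast at hmod
  have hsq : ∀ a b c : ZMod 3, b ≠ 0 → c ≠ 0 → a ^ 2 ≠ b * (3 * b - c ^ 2) * (b - 3 * c ^ 2) := by
    decide
  exact hsq _ _ _ hm₃ he₃ hmod

theorem hasPointOfHeightLT_of_odd_sq_sub_sq {a e k : ℤ} (ha : 0 < a) (he : 0 < e)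
    (hae : IsCoprime a e) (hodd : Odd (a ^ 2 - e ^ 2))
    (hk : (a ^ 2 - e ^ 2) * (a ^ 2 - 9 * e ^ 2) = k ^ 2) (hk0 : k ≠ 0) :
    HasPointOfHeightLT (a ^ 2 + e ^ 2) := by
  have hcop : IsCoprime (a ^ 2 - e ^ 2) (a ^ 2 - 9 * e ^ 2) := by
    have h8 : IsCoprime (a ^ 2 - e ^ 2) (2 ^ 3 * e ^ 2) :=
      (Int.isCoprime_two_right.2 hodd).pow_right.mul_right hae.sq_sub_sq.pow_right
    rw [show a ^ 2 - 9 * e ^ 2 = -(2 ^ 3 * e ^ 2) + (a ^ 2 - e ^ 2) * 1 by ring]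
    exact h8.neg_right.add_mul_left_right 1
  obtain ⟨p, q, hp, hq, ⟨hP, hQ⟩ | ⟨hP, hQ⟩⟩ :=
    Int.exists_pos_sq_of_isCoprime_of_mul_eq_sq hcop hk hk0
  · exact (hasPointOfHeightLT_of_sq_eq_sq_add_sq ha hp hq he
      (by linear_combination hP) (by linear_combination hQ)).mono (by nlinarith)
  · exact (hasPointOfHeightLT_of_sq_eq_sq_add_sq (A := 3 * e) (by positivity) hq
      (by positivity : 0 < 3 * p) ha (by linear_combination -hQ)
      (by linear_combination -9 * hP)).mono (by nlinarith)

theorem hasPointOfHeightLT_of_odd_of_odd {a e k : ℤ} (ha : 0 < a) (he : 0 < e)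
    (hae : IsCoprime a e) (ha2 : Odd a) (he2 : Odd e)
    (hk : (a ^ 2 - e ^ 2) * (a ^ 2 - 9 * e ^ 2) = k ^ 2) (hk0 : k ≠ 0) :
    HasPointOfHeightLT (a ^ 2 + e ^ 2) := by
  obtain ⟨s, hs⟩ : 8 ∣ a ^ 2 - e ^ 2 := by
    simpa using dvd_sub (Int.eight_dvd_sq_sub_one_of_odd ha2) (Int.eight_dvd_sq_sub_one_of_odd he2)
  obtain ⟨t, ht⟩ : 8 ∣ a ^ 2 - 9 * e ^ 2 := by
    simpa [mul_pow] using dvd_sub (Int.eight_dvd_sq_sub_one_of_odd ha2)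
      (Int.eight_dvd_sq_sub_one_of_odd ((by decide : Odd (3 : ℤ)).mul he2))
  obtain ⟨k, rfl⟩ : 8 ∣ k := (Int.pow_dvd_pow_iff two_ne_zero).1
    ⟨s * t, by linear_combination -hk + (a ^ 2 - e ^ 2) * ht + 8 * t * hs⟩
  have hst : s * t = k ^ 2 := mul_left_cancel₀ (by norm_num : (64 : ℤ) ≠ 0)
    (by linear_combination hk - (a ^ 2 - e ^ 2) * ht - 8 * t * hs)
  have hse : IsCoprime s e := (hs ▸ hae.sq_sub_sq).of_mul_left_right
  have hcop : IsCoprime s t := by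
    rw [show t = -e ^ 2 + s * 1 by linarith]
    exact hse.pow_right.neg_right.add_mul_left_right 1
  obtain ⟨p, q, hp, hq, ⟨hP, hQ⟩ | ⟨hP, hQ⟩⟩ :=
    Int.exists_pos_sq_of_isCoprime_of_mul_eq_sq hcop hst (by rintro rfl; simp at hk0)
  · exact (hasPointOfHeightLT_of_sq_eq_sq_add_sq (A := 3 * p) (by positivity) ha
      (by positivity : 0 < 3 * e) hq (by linarith) (by linarith)).mono (by nlinarith)
  · exact (hasPointOfHeightLT_of_sq_eq_sq_add_sq hq he ha hp
      (by linarith) (by linarith)).mono (by nlinarith)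

theorem hasPointOfHeightLT_of_isCoprime {a e k : ℤ} (ha : 0 < a) (he : 0 < e)
    (hae : IsCoprime a e) (hk : (a ^ 2 - e ^ 2) * (a ^ 2 - 9 * e ^ 2) = k ^ 2) (hk0 : k ≠ 0) :
    HasPointOfHeightLT (a ^ 2 + e ^ 2) := by
  rcases Int.even_or_odd a with ha2 | ha2 <;> rcases Int.even_or_odd e with he2 | he2
  · have := hae.isUnit_of_dvd' ha2.two_dvd he2.two_dvd
    norm_num [Int.isUnit_iff] at this
  · exact hasPointOfHeightLT_of_odd_sq_sub_sq ha he hae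
      ((ha2.pow_of_ne_zero two_ne_zero).sub_odd he2.pow) hk hk0
  · exact hasPointOfHeightLT_of_odd_sq_sub_sq ha he hae
      (ha2.pow.sub_even (he2.pow_of_ne_zero two_ne_zero)) hk hk0
  · exact hasPointOfHeightLT_of_odd_of_odd ha he hae ha2 he2 hk hk0

theorem hasPointOfHeightLT_of_not_three_dvd {m e n : ℤ} (hm : 0 < m) (he : 0 < e)
    (hme : IsCoprime m e) (hn : n ^ 2 = m * (m - e ^ 2) * (m - 9 * e ^ 2)) (hn0 : n ≠ 0)
    (h3 : ¬ 3 ∣ m) : HasPointOfHeightLT (m + e ^ 2) := by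
  have h₁ : IsCoprime m (m - e ^ 2) := by
    rw [show m - e ^ 2 = -e ^ 2 + m * 1 by ring]
    exact hme.pow_right.neg_right.add_mul_left_right 1
  have h₉ : IsCoprime m (m - 9 * e ^ 2) := by
    rw [show m - 9 * e ^ 2 = -(3 ^ 2 * e ^ 2) + m * 1 by ring]
    exact ((Int.prime_three.coprime_iff_not_dvd.2 h3).symm.pow_right.mul_right
      hme.pow_right).neg_right.add_mul_left_right 1
  obtain ⟨a, k, ha, rfl, hk, rfl⟩ :=
    Int.exists_sq_eq_of_isCoprime_of_mul_eq_sq (h₁.mul_right h₉) (by rw [hn]; ring) hm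
  exact hasPointOfHeightLT_of_isCoprime ha he ((IsCoprime.pow_left_iff two_pos).1 hme) hk
    (by rintro rfl; simp at hn0)

theorem exists_point_ratHeight_lt {x y : ℚ} (h : y ^ 2 = x * (x - 1) * (x - 9)) (hy : y ≠ 0) :
    ∃ x' y' : ℚ, y' ^ 2 = x' * (x' - 1) * (x' - 9) ∧ y' ≠ 0 ∧ ratHeight x' < ratHeight x := by
  obtain ⟨m, e, n, hm, he, hme, hn0, hx, hxh, hn⟩ := exists_int_model h hy
  suffices HasPointOfHeightLT (m + e ^ 2) by
    obtain ⟨x', y', h', hy', hlt⟩ := this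
    exact ⟨x', y', h', hy', by omega⟩
  by_cases h3 : 3 ∣ m
  · exact hasPointOfHeightLT_of_nine_dvd h hy hm he hx (nine_dvd_of_three_dvd hme hn h3)
  · exact hasPointOfHeightLT_of_not_three_dvd hm he hme hn hn0 h3

theorem eq_zero_of_sq_eq_mul_sub_one_mul_sub_nine {x y : ℚ}
    (h : y ^ 2 = x * (x - 1) * (x - 9)) : y = 0 := by
  induction hx : ratHeight x using Nat.strong_induction_on generalizing x y with
  | _ n ih =>
    by_contra hy
    obtain ⟨x', y', h', hy', hlt⟩ := exists_point_ratHeight_lt h hy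
    exact hy' (ih _ (hx ▸ hlt) h' rfl)

theorem sq_add_two_mul_mul_ne_neg_four {u v w : ℚ} (hv : v ≠ 0)
    (h : 3 * u * w - 2 * u - 2 * w + 4 = 0) : v ^ 2 + 2 * u * w ≠ -4 := by
  intro hE
  have hw : 3 * w - 2 ≠ 0 := by
    intro hw
    obtain rfl : w = 2 / 3 := by linarith
    linarith
  have hpt : (3 * v * (3 * w - 2) / 2) ^ 2 = (3 - 3 * w) * (3 - 3 * w - 1) * (3 - 3 * w - 9) := by
    linear_combination (9 * w - 27 / 2 * w ^ 2) * h + 9 / 4 * (3 * w - 2) ^ 2 * hE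
  simpa [hv, hw] using eq_zero_of_sq_eq_mul_sub_one_mul_sub_nine hpt

theorem r_not_square_in_cubic_field_general (N : ℚ)
    (hcube : ¬ ∃ c : ℚ, c ^ 3 = N) (α₀ : ℝ) (hα : α₀ ^ 3 = (N : ℝ)) :
    ¬ ∃ u v w : ℚ, ((u : ℝ) + v * α₀ + w * α₀ ^ 2) ^ 2
      = 4 * (α₀ ^ 2 + (α₀ ^ 2 - 1) ^ 2) := by
  rintro ⟨u, v, w, huvw⟩
  have hdeg : 2 < (minpoly ℚ α₀).natDegree := by
    rw [natDegree_minpoly_of_pow_eq Nat.prime_three (fun b hb => hcube ⟨b, hb⟩)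
      (by simpa using hα)]
    norm_num
  obtain ⟨E₁, E₂, E₃⟩ := eq_zero_of_algebraMap_add_mul_add_mul_sq_eq_zero hdeg
    (a := u ^ 2 + 2 * N * v * w - 4) (b := 2 * u * v + N * w ^ 2 - 4 * N)
    (c := v ^ 2 + 2 * u * w + 4) (by
      simp only [eq_ratCast]
      push_cast
      linear_combination huvw - (2 * (v : ℝ) * w + ((w : ℝ) ^ 2 - 4) * α₀) * hα)
  have hv : v ≠ 0 := by
    rintro rfl
    have hw : w ^ 2 = 1 := by nlinarith
    exact hcube ⟨0, by nlinarith⟩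
  -- this combination eliminates `N` and `v`
  have key : (3 * u * w - 2 * u - 2 * w + 4) * (3 * u * w + 2 * u + 2 * w + 4) = 0 := by
    linear_combination (w ^ 2 - 4) * E₁ - 2 * v * w * E₂ + 4 * u * w * E₃
  rcases mul_eq_zero.1 key with hA | hB
  · exact sq_add_two_mul_mul_ne_neg_four hv hA (by linear_combination E₃)
  · exact sq_add_two_mul_mul_ne_neg_four (u := -u) (w := -w) hv (by linear_combination hB)
      (by linear_combination E₃)

/-- Let `N` be a rational number with `N ≠ ±1` and `N` not a rational cube, let `α₀` be
a real cube root of `N`, and let `r = 4(α₀² + (α₀²−1)²)`. Then `r` is not a square in the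
field `ℚ(α₀)` (whose elements are of the form `u + v·α₀ + w·α₀²` with `u, v, w ∈ ℚ`). -/
theorem r_not_square_in_cubic_field (N : ℚ) (h1 : N ≠ 1) (h2 : N ≠ -1)
    (hcube : ¬ ∃ c : ℚ, c ^ 3 = N) (α₀ : ℝ) (hα : α₀ ^ 3 = (N : ℝ)) :
    ¬ ∃ u v w : ℚ, ((u : ℝ) + v * α₀ + w * α₀ ^ 2) ^ 2
      = 4 * (α₀ ^ 2 + (α₀ ^ 2 - 1) ^ 2) :=
  r_not_square_in_cubic_field_general N hcube α₀ hα
end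

section
/- Let N be a rational number, N ≠ ±1, N a rational cube, and set α₀ = N^{1/3} ∈ ℚ. Then r = 4(α₀² + (α₀²−1)²) is not a square in ℚ. -/
/-!
Write α₀ = a / b in lowest terms. Then r is a rational square iff c² = a⁴ - a²b² + b⁴ for an
integer c, i.e. (a² - b², ab, c) is a primitive Pythagorean triple. Parametrizing it produces a
`DescentQuadruple`: coprime pairs (x, y), (p, q) with xy = 2pq and x² - y² = ±(p² - q²).
Splitting xy/2 = pq as (ab)(cd) = (ac)(bd) turns a quadruple into coprime α, δ with α odd and
both α² + δ² and α² + (2δ)² squares, where δ ∣ pq; parametrizing these two triples, which share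
the odd leg α, yields a new quadruple with product δ, at most half the old one. Infinite descent
rules out every quadruple, so a⁴ - a²b² + b⁴ is a square only when ab = 0 or a² = b², i.e.
α₀ ∈ {0, ±1}, N ∈ {0, ±1}.
-/

theorem PythagoreanTriple.exists_of_odd_of_isCoprime {x y z : ℤ} (h : PythagoreanTriple x y z)
    (hco : IsCoprime x y) (hx : Odd x) :
    ∃ m n, IsCoprime m n ∧ x = m ^ 2 - n ^ 2 ∧ y = 2 * (m * n) := by
  obtain ⟨m, n, hxy | ⟨hx', -⟩, hmn, -⟩ :=
    h.isPrimitiveClassified_of_coprime (Int.isCoprime_iff_gcd_eq_one.mp hco)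
  · exact ⟨m, n, Int.isCoprime_iff_gcd_eq_one.mpr hmn, hxy.1, by rw [hxy.2]; ring⟩
  · exact absurd ⟨m * n, by rw [hx']; ring⟩ (Int.not_even_iff_odd.mpr hx)

theorem Int.exists_eq_mul_of_mul_eq_mul {x y p q : ℤ} (hp : p ≠ 0) (h : x * y = p * q) :
    ∃ a b c d, x = a * b ∧ y = c * d ∧ p = a * c ∧ q = b * d := by
  obtain ⟨a, c, ⟨b, rfl⟩, ⟨d, rfl⟩, rfl⟩ := exists_dvd_and_dvd_of_dvd_mul (Dvd.intro q h.symm)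
  refine ⟨a, b, c, d, rfl, rfl, rfl, ?_⟩
  exact (mul_left_cancel₀ hp (by rw [← h]; ring)).symm

theorem Int.not_three_dvd_sq_add_sq {a b : ℤ} (h : IsCoprime a b) : ¬ 3 ∣ a ^ 2 + b ^ 2 := by
  intro h3
  have key : ∀ u v : ZMod 3, u ^ 2 + v ^ 2 = 0 → u = 0 ∧ v = 0 := by decide
  have := (ZMod.intCast_zmod_eq_zero_iff_dvd _ 3).mpr h3
  push_cast at this
  obtain ⟨ha, hb⟩ := key _ _ this
  rw [ZMod.intCast_zmod_eq_zero_iff_dvd] at ha hb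
  exact Int.prime_three.not_isUnit (h.isUnit_of_dvd' ha hb)

theorem Int.sq_add_sq_eq_of_mul_eq_mul {a b c d : ℤ} (had : IsCoprime a d) (hbc : IsCoprime b c)
    (hc : c ≠ 0) (h : b ^ 2 * (a ^ 2 + d ^ 2) = c ^ 2 * (a ^ 2 + 4 * d ^ 2)) :
    a ^ 2 + d ^ 2 = c ^ 2 ∧ a ^ 2 + 4 * d ^ 2 = b ^ 2 := by
  obtain ⟨k, hk⟩ : c ^ 2 ∣ a ^ 2 + d ^ 2 := hbc.symm.pow.dvd_of_dvd_mul_left ⟨_, h⟩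
  have hbk : a ^ 2 + 4 * d ^ 2 = b ^ 2 * k :=
    mul_left_cancel₀ (pow_ne_zero 2 hc) (by rw [← h, hk]; ring)
  have hkd : IsCoprime k d := by
    have : IsCoprime (a ^ 2 + d * d) d := had.pow_left.add_mul_left_left d
    exact (by simpa [← sq] using this : IsCoprime (a ^ 2 + d ^ 2) d).of_isCoprime_of_dvd_left
      (Dvd.intro_left _ hk.symm)
  have hk3 : k ∣ 3 :=
    (hkd.pow_right (n := 2)).dvd_of_dvd_mul_right ⟨b ^ 2 - c ^ 2, by linear_combination hbk - hk⟩
  have hk0 : 0 < k := by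
    have : 0 < a ^ 2 + d ^ 2 := by
      rcases had.ne_zero_or_ne_zero with ha | hd <;> positivity
    exact pos_of_mul_pos_right (hk ▸ this) (sq_nonneg c)
  have hk_le : k ≤ 3 := Int.le_of_dvd three_pos hk3
  interval_cases k
  · exact ⟨by simpa using hk, by simpa using hbk⟩
  · norm_num at hk3
  · exact absurd ⟨c ^ 2, by rw [hk]; ring⟩ (Int.not_three_dvd_sq_add_sq had)

structure DescentQuadruple (x y p q : ℤ) : Prop where
  mul_ne_zero : x * y ≠ 0
  isCoprime_left : IsCoprime x y
  isCoprime_right : IsCoprime p q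
  mul_eq : x * y = 2 * (p * q)
  sq_sub_sq : x ^ 2 - y ^ 2 = p ^ 2 - q ^ 2 ∨ x ^ 2 - y ^ 2 = q ^ 2 - p ^ 2

namespace DescentQuadruple

variable {x y p q : ℤ}

theorem swap (h : DescentQuadruple x y p q) : DescentQuadruple y x p q where
  mul_ne_zero := mul_comm x y ▸ h.mul_ne_zero
  isCoprime_left := h.isCoprime_left.symm
  isCoprime_right := h.isCoprime_right
  mul_eq := mul_comm x y ▸ h.mul_eq
  sq_sub_sq :=
    h.sq_sub_sq.symm.imp (fun e => by linear_combination -e) (fun e => by linear_combination -e)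

theorem exists_sq_add_sq (h : DescentQuadruple x y p q) (hx : Odd x) :
    ∃ α δ γ β : ℤ, Odd α ∧ IsCoprime α δ ∧ δ ≠ 0 ∧ α ^ 2 + δ ^ 2 = γ ^ 2 ∧
      α ^ 2 + 4 * δ ^ 2 = β ^ 2 ∧ δ ∣ p * q := by
  obtain ⟨y, rfl⟩ : 2 ∣ y := by
    have : Even (x * y) := ⟨p * q, by rw [h.mul_eq]; ring⟩
    exact even_iff_two_dvd.mp ((Int.even_mul.mp this).resolve_left (Int.not_even_iff_odd.mpr hx))
  have hp : p ≠ 0 := fun hp => h.mul_ne_zero (by rw [h.mul_eq, hp]; ring)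
  obtain ⟨a, b, c, d, rfl, rfl, rfl, rfl⟩ :=
    Int.exists_eq_mul_of_mul_eq_mul (x := x) (y := y) (q := q) hp
      (mul_left_cancel₀ two_ne_zero (by linear_combination h.mul_eq))
  obtain ⟨⟨-, -⟩, hc, hd⟩ : (a ≠ 0 ∧ b ≠ 0) ∧ c ≠ 0 ∧ d ≠ 0 := by
    simpa [not_or] using h.mul_ne_zero
  have hxy := h.isCoprime_left
  have had : IsCoprime a d := hxy.of_mul_left_left.of_mul_right_right.of_mul_right_right
  have hbc : IsCoprime b c := hxy.of_mul_left_right.of_mul_right_right.of_mul_right_left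
  rcases h.sq_sub_sq with e | e
  · obtain ⟨h1, h2⟩ := Int.sq_add_sq_eq_of_mul_eq_mul had hbc hc (by linear_combination e)
    exact ⟨a, d, c, b, (Int.odd_mul.mp hx).1, had, hd, h1, h2, (dvd_mul_left d b).mul_left _⟩
  · obtain ⟨h1, h2⟩ := Int.sq_add_sq_eq_of_mul_eq_mul hbc had hd (by linear_combination e)
    exact ⟨b, c, d, a, (Int.odd_mul.mp hx).2, hbc, hc, h1, h2, (dvd_mul_left c a).mul_right _⟩

theorem exists_of_sq_add_sq {α δ γ β : ℤ} (hα : Odd α) (hco : IsCoprime α δ)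
    (hδ : δ ≠ 0) (h1 : α ^ 2 + δ ^ 2 = γ ^ 2) (h2 : α ^ 2 + 4 * δ ^ 2 = β ^ 2) :
    ∃ x y p q, DescentQuadruple x y p q ∧ x * y = δ := by
  obtain ⟨m, n, hmn, hαm, hδm⟩ := PythagoreanTriple.exists_of_odd_of_isCoprime (z := γ)
    (by unfold PythagoreanTriple; linear_combination h1) hco hα
  obtain ⟨r, s, hrs, hαr, hδr⟩ := PythagoreanTriple.exists_of_odd_of_isCoprime
    (z := β) (by unfold PythagoreanTriple; linear_combination h2)
    ((Int.isCoprime_two_right.mpr hα).mul_right hco) hα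
  have hδrs : r * s = δ := (mul_left_cancel₀ two_ne_zero hδr).symm
  exact ⟨r, s, m, n, ⟨hδrs ▸ hδ, hrs, hmn, by rw [hδrs, hδm], .inl (hαr ▸ hαm)⟩, hδrs⟩

theorem exists_natAbs_mul_lt (h : DescentQuadruple x y p q) :
    ∃ x' y' p' q', DescentQuadruple x' y' p' q' ∧ (x' * y').natAbs < (x * y).natAbs := by
  wlog hx : Odd x generalizing x y
  · have hy : Odd y := Int.isCoprime_two_left.mp <| h.isCoprime_left.of_isCoprime_of_dvd_left <|
      even_iff_two_dvd.mp (Int.not_odd_iff_even.mp hx)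
    simpa only [mul_comm y x] using this h.swap hy
  obtain ⟨α, δ, γ, β, hα, hco, hδ, h1, h2, hdvd⟩ := h.exists_sq_add_sq hx
  obtain ⟨x', y', p', q', h', rfl⟩ := exists_of_sq_add_sq hα hco hδ h1 h2
  have hpq : p * q ≠ 0 := fun hpq => h.mul_ne_zero (by rw [h.mul_eq, hpq, mul_zero])
  refine ⟨x', y', p', q', h', ?_⟩
  calc (x' * y').natAbs ≤ (p * q).natAbs := Int.natAbs_le_of_dvd_ne_zero hdvd hpq
    _ < (x * y).natAbs := by
      rw [h.mul_eq, Int.natAbs_mul 2]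
      exact lt_mul_left (Int.natAbs_pos.mpr hpq) one_lt_two

end DescentQuadruple

theorem not_descentQuadruple (x y p q : ℤ) : ¬ DescentQuadruple x y p q := fun h =>
  let ⟨x', y', p', q', h', _⟩ := h.exists_natAbs_mul_lt
  not_descentQuadruple x' y' p' q' h'
termination_by (x * y).natAbs

theorem Int.not_isSquare_pow_four_sub_sq_mul_sq_add_pow_four {a b : ℤ} (hab : IsCoprime a b)
    (ha : a ≠ 0) (hb : b ≠ 0) (hne : a ^ 2 ≠ b ^ 2) :
    ¬ IsSquare (a ^ 4 - a ^ 2 * b ^ 2 + b ^ 4) := by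
  rintro ⟨c, hc⟩
  have ht : PythagoreanTriple (a ^ 2 - b ^ 2) (a * b) c := by
    unfold PythagoreanTriple; linear_combination hc
  have hco : IsCoprime (a ^ 2 - b ^ 2) (a * b) := by
    refine .mul_right ?_ ?_
    · rw [show a ^ 2 - b ^ 2 = -b ^ 2 + a * a by ring]
      exact (hab.symm.pow_left (m := 2)).neg_left.add_mul_left_left a
    · rw [show a ^ 2 - b ^ 2 = a ^ 2 + b * -b by ring]
      exact hab.pow_left.add_mul_left_left (-b)
  rcases Int.even_or_odd (a * b) with he | ho
  · have hodd : Odd (a ^ 2 - b ^ 2) :=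
      Int.isCoprime_two_right.mp (hco.of_isCoprime_of_dvd_right (even_iff_two_dvd.mp he))
    obtain ⟨m, n, hmn, h1, h2⟩ := ht.exists_of_odd_of_isCoprime hco hodd
    exact not_descentQuadruple a b m n ⟨mul_ne_zero ha hb, hab, hmn, h2, .inl h1⟩
  · obtain ⟨m, n, hmn, h1, h2⟩ := ht.symm.exists_of_odd_of_isCoprime hco.symm ho
    obtain ⟨hao, hbo⟩ := Int.odd_mul.mp ho
    obtain ⟨X, hX⟩ := hao.add_odd hbo
    obtain ⟨Y, rfl⟩ : ∃ Y, a = X + Y := ⟨a - X, by ring⟩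
    obtain rfl : b = X - Y := by linear_combination hX
    refine not_descentQuadruple m n X Y ⟨?_, hmn, ?_, ?_, .inl (by linear_combination -h1)⟩
    · exact fun h0 => hne (by linear_combination h2 + 2 * h0)
    · obtain ⟨u, v, huv⟩ := hab
      exact ⟨u + v, u - v, by linear_combination huv⟩
    · exact mul_left_cancel₀ two_ne_zero (by linear_combination -h2)

theorem Rat.not_isSquare_pow_four_sub_sq_add_one {α : ℚ} (h0 : α ≠ 0) (h1 : α ^ 2 ≠ 1) :
    ¬ IsSquare (α ^ 4 - α ^ 2 + 1) := by
  intro hsq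
  have hα : α * α.den = α.num := Rat.mul_den_eq_num α
  have hden : (α.den : ℚ) ≠ 0 := by positivity
  have key : ((α.num ^ 4 - α.num ^ 2 * (α.den : ℤ) ^ 2 + (α.den : ℤ) ^ 4 : ℤ) : ℚ) =
      (α ^ 4 - α ^ 2 + 1) * ((α.den : ℚ) ^ 2) ^ 2 := by
    push_cast; rw [← hα]; ring
  refine Int.not_isSquare_pow_four_sub_sq_mul_sq_add_pow_four
    α.isCoprime_num_den (Rat.num_ne_zero.mpr h0) (by positivity) ?_
    (Rat.isSquare_intCast_iff.mp (key ▸ hsq.mul (.sq _)))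
  intro hsq'
  apply h1
  have : (α ^ 2 - 1) * (α.den : ℚ) ^ 2 = 0 := by
    rw [sub_mul, one_mul, ← mul_pow, hα]; exact_mod_cast sub_eq_zero.mpr hsq'
  simpa [sub_eq_zero, hden] using this

/-- Let `N` be a rational number, `N ≠ 0, ±1`, `N` a rational cube with cube root
`α₀ ∈ ℚ`. Then `r = 4(α₀² + (α₀²−1)²)` is not a square in `ℚ`. -/
theorem r_not_square_rational (N : ℚ) (h0 : N ≠ 0) (h1 : N ≠ 1) (h2 : N ≠ -1)
    (α₀ : ℚ) (hα : α₀ ^ 3 = N) :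
    ¬ ∃ q : ℚ, q ^ 2 = 4 * (α₀ ^ 2 + (α₀ ^ 2 - 1) ^ 2) := by
  rintro ⟨q, hq⟩
  have hα0 : α₀ ≠ 0 := by rintro rfl; exact h0 (by rw [← hα]; norm_num)
  have hα1 : α₀ ^ 2 ≠ 1 := by
    rintro h
    rcases sq_eq_one_iff.mp h with rfl | rfl
    · exact h1 (by rw [← hα]; norm_num)
    · exact h2 (by rw [← hα]; norm_num)
  exact Rat.not_isSquare_pow_four_sub_sq_add_one hα0 hα1 ⟨q / 2, by linear_combination -hq / 4⟩
end
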